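/- For the matrix M(λ,J) = M_1 obtained from the recursive construction M_a = Φ_1(Ω_{J^a}(M_{a+1})), the CTM energy E_CTM(M) := sum of the top-row entries of M equals the rigged-configuration energy E_RC(λ,J) := ∑_{i,j} min(i,j) m_i m_j + ∑_i ∑_{j=1}^{m_i} J^i_j. -/

import Mathlib

/-!
A matrix in `H_n` (a 2×n integer matrix whose entries read column by column, top then
bottom, are weakly increasing) is recorded by its reading sequence
`α_1 ≤ α_2 ≤ ⋯ ≤ α_{2n}`, as a sorted list of integers.
-/

/-- `Φ_1` adds `(1,3,…,2n−1)` to the top row and `(2,4,…,2n)` to the bottom row,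
i.e. it adds `k` to the `k`-th entry (1-based) of the reading sequence. -/
def Phi1 (l : List ℤ) : List ℤ := l.mapIdx (fun i a => a + (i : ℤ) + 1)

/-- `Ω_X` inserts two copies of each element of the finite multiset `X` (recorded as a
list) into the sorted reading sequence. -/
def OmegaL (X : List ℤ) (l : List ℤ) : List ℤ :=
  X.foldr (fun x m => List.orderedInsert (· ≤ ·) x (List.orderedInsert (· ≤ ·) x m)) l

/-- The recursive construction: `Mrec J h k` is the matrix `M_{h+1-k}`, where
`M_{h+1}` is the empty matrix and `M_a = Φ_1(Ω_{J^a}(M_{a+1}))`. -/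
def Mrec (J : ℕ → List ℤ) (h : ℕ) : ℕ → List ℤ
  | 0 => []
  | k + 1 => Phi1 (OmegaL (J (h - k)) (Mrec J h k))

/-- The CTM energy: the sum of the top-row entries, i.e. of the entries in odd (1-based)
positions `β_1, β_3, …` of the reading sequence. -/
def ectm : List ℤ → ℤ
  | a :: _ :: t => a + ectm t
  | [a] => a
  | [] => 0

/-!
Doubly inserting `x` into a sorted sequence puts the two copies in adjacent positions, one in
each row, so `Ω_X` raises the top-row sum by `∑ X`; and `Φ_1` raises the top-row sum of a
matrix with `n` columns by `1 + 3 + ⋯ + (2n - 1) = n²`. Since `M_a` has `∑_{i ≥ a} m_i`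
columns, `E_CTM(M_1) = ∑_{c=1}^h (∑_{i ≥ c} m_i)² + ∑_i ∑ J^i`, and expanding the squares
counts each product `m_i m_j` once for every `c ≤ min(i, j)`.
-/

open Finset

theorem sum_sq_sum_Icc_eq_sum_min_mul {R : Type*} [CommSemiring R] (f : ℕ → R) (h : ℕ) :
    ∑ c ∈ Icc 1 h, (∑ i ∈ Icc c h, f i) ^ 2
      = ∑ i ∈ Icc 1 h, ∑ j ∈ Icc 1 h, ((min i j : ℕ) : R) * f i * f j := by
  calc ∑ c ∈ Icc 1 h, (∑ i ∈ Icc c h, f i) ^ 2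
      = ∑ c ∈ Icc 1 h, ∑ i ∈ Icc c h, ∑ j ∈ Icc c h, f i * f j := by
        simp only [sq, sum_mul_sum]
    _ = ∑ i ∈ Icc 1 h, ∑ c ∈ Icc 1 i, ∑ j ∈ Icc c h, f i * f j :=
        sum_comm' fun c i => by simp only [mem_Icc]; omega
    _ = ∑ i ∈ Icc 1 h, ∑ j ∈ Icc 1 h, ∑ _c ∈ Icc 1 (min i j), f i * f j := by
        refine sum_congr rfl fun i hi => sum_comm' fun c j => ?_
        simp only [mem_Icc] at hi ⊢; omega
    _ = ∑ i ∈ Icc 1 h, ∑ j ∈ Icc 1 h, ((min i j : ℕ) : R) * f i * f j := by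
        simp only [sum_const, Nat.card_Icc, nsmul_eq_mul, Nat.add_sub_cancel, mul_assoc]

theorem sum_Icc_eq_add_sum_Icc_add_one {M : Type*} [AddCommMonoid M] (g : ℕ → M) {a b : ℕ}
    (hab : a ≤ b) : ∑ c ∈ Icc a b, g c = g a + ∑ c ∈ Icc (a + 1) b, g c := by
  rw [Icc_add_one_left_eq_Ioc, add_sum_Ioc_eq_sum_Icc hab]

theorem ectm_cons (a : ℤ) (t : List ℤ) : ectm (a :: t) = a + ectm t.tail := by
  cases t <;> simp [ectm]

-- `ectm l.tail` is the bottom-row sum: the induction has to track both rows.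
theorem ectm_orderedInsert_orderedInsert (x : ℤ) (l : List ℤ) :
    ectm (List.orderedInsert (· ≤ ·) x (List.orderedInsert (· ≤ ·) x l)) = x + ectm l ∧
      ectm (List.orderedInsert (· ≤ ·) x (List.orderedInsert (· ≤ ·) x l)).tail
        = x + ectm l.tail := by
  induction l with
  | nil => simp [ectm]
  | cons a t ih =>
    by_cases hxa : x ≤ a
    · simp [hxa, ectm_cons]
    · simp only [List.orderedInsert, if_neg hxa, ectm_cons, List.tail_cons, ih.1, ih.2]
      exact ⟨add_left_comm a x _, trivial⟩

theorem ectm_OmegaL (X l : List ℤ) : ectm (OmegaL X l) = X.sum + ectm l := by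
  induction X with
  | nil => simp [OmegaL]
  | cons x X ih =>
    simp only [OmegaL, List.foldr_cons, List.sum_cons] at ih ⊢
    rw [(ectm_orderedInsert_orderedInsert x _).1, ih, add_assoc]

theorem length_OmegaL (X l : List ℤ) : (OmegaL X l).length = 2 * X.length + l.length := by
  induction X with
  | nil => simp [OmegaL]
  | cons x X ih =>
    simp only [OmegaL, List.foldr_cons, List.length_cons, List.orderedInsert_length] at ih ⊢
    rw [ih]; ring

theorem ectm_mapIdx_add_index (c : ℤ) (n : ℕ) (l : List ℤ) (hl : l.length = 2 * n) :
    ectm (l.mapIdx fun i a => a + i + c) = ectm l + n * (n - 1 + c) := by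
  induction n generalizing c l with
  | zero => simp_all [ectm]
  | succ n ih =>
    obtain _ | ⟨a, _ | ⟨b, t⟩⟩ := l
    · simp at hl
    · simp at hl; omega
    · have ht : t.length = 2 * n := by simp at hl; omega
      have hshift : (fun (i : ℕ) (a : ℤ) => a + ((i + 1 + 1 : ℕ) : ℤ) + c)
          = fun (i : ℕ) (a : ℤ) => a + i + (c + 2) := by
        funext i a; push_cast; ring
      simp only [List.mapIdx_cons, ectm, hshift, ih (c + 2) t ht]
      push_cast; ring

theorem ectm_Phi1 (n : ℕ) (l : List ℤ) (hl : l.length = 2 * n) :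
    ectm (Phi1 l) = ectm l + n ^ 2 := by
  rw [Phi1, ectm_mapIdx_add_index 1 n l hl]; ring

theorem length_Mrec (J : ℕ → List ℤ) {h k a : ℕ} (hka : k + a = h + 1) :
    (Mrec J h k).length = 2 * ∑ i ∈ Icc a h, (J i).length := by
  induction k generalizing a with
  | zero => simp [Mrec, show h < a by omega]
  | succ k ih =>
    rw [Mrec, Phi1, List.length_mapIdx, length_OmegaL, ih (a := a + 1) (by omega),
      show h - k = a by omega, sum_Icc_eq_add_sum_Icc_add_one _ (show a ≤ h by omega)]
    ring

theorem ectm_Mrec (J : ℕ → List ℤ) {h k a : ℕ} (hka : k + a = h + 1) :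
    ectm (Mrec J h k)
      = ∑ c ∈ Icc a h, (∑ i ∈ Icc c h, ((J i).length : ℤ)) ^ 2 + ∑ i ∈ Icc a h, (J i).sum := by
  induction k generalizing a with
  | zero => simp [Mrec, ectm, show h < a by omega]
  | succ k ih =>
    have hah : a ≤ h := by omega
    have hsize : (OmegaL (J a) (Mrec J h k)).length = 2 * ∑ i ∈ Icc a h, (J i).length := by
      rw [length_OmegaL, length_Mrec J (a := a + 1) (by omega),
        sum_Icc_eq_add_sum_Icc_add_one _ hah]
      ring
    rw [Mrec, show h - k = a by omega, ectm_Phi1 _ _ hsize, ectm_OmegaL,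
      ih (a := a + 1) (by omega),
      sum_Icc_eq_add_sum_Icc_add_one (fun c => (∑ i ∈ Icc c h, ((J i).length : ℤ)) ^ 2) hah,
      sum_Icc_eq_add_sum_Icc_add_one (fun i => (J i).sum) hah]
    push_cast
    ring

theorem energy_Mrec_general (h : ℕ) (m : ℕ → ℕ) (J : ℕ → List ℤ)
    (hlen : ∀ i, (J i).length = m i) :
    ectm (Mrec J h h)
      = (∑ i ∈ Finset.Icc 1 h, ∑ j ∈ Finset.Icc 1 h,
          ((min i j : ℕ) : ℤ) * (m i : ℤ) * (m j : ℤ))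
        + ∑ i ∈ Finset.Icc 1 h, (J i).sum := by
  rw [ectm_Mrec J (a := 1) (by omega), ← sum_sq_sum_Icc_eq_sum_min_mul]
  simp only [hlen]

/-- Energy preservation: for `M(λ,J) = M_1`, the CTM energy (sum of top-row entries)
equals the rigged-configuration energy
`E_RC(λ,J) = ∑_{i,j} min(i,j) m_i m_j + ∑_i ∑_{j=1}^{m_i} J^i_j`. -/
theorem energy_Mrec (h : ℕ) (m : ℕ → ℕ) (J : ℕ → List ℤ)
    (hlen : ∀ i, (J i).length = m i) (hsort : ∀ i, (J i).Pairwise (· ≤ ·)) :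
    ectm (Mrec J h h)
      = (∑ i ∈ Finset.Icc 1 h, ∑ j ∈ Finset.Icc 1 h,
          ((min i j : ℕ) : ℤ) * (m i : ℤ) * (m j : ℤ))
        + ∑ i ∈ Finset.Icc 1 h, (J i).sum :=
  energy_Mrec_general h m J hlen
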